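/- Let n ≥ 0, let T be a standard Young tableau of shape θ^(n), and let ψ(T) = p_1…p_{2n+2} be defined by p_i = E if the entry i+2 of T lies in the arm, p_i = N if i+2 lies in the leg, p_i = S if i+2 lies in the heart and 2 lies in the arm, and p_i = W if i+2 lies in the heart and 2 lies in the leg. If p_i = S for some i, then there exists j < i with p_j = N; and if p_i = W for some i, then there exists j < i with p_j = E. Consequently, the lattice path ψ(T) stays weakly inside the first quadrant. -/

import Mathlib

/-!
The letter `p_i` records the cell of the entry `i + 2`, and `S`, `W` only come from the heart,
so the word contains at most one of them. Since `1` sits in the corner, `2` sits at `(0,1)` or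
at `(1,0)`. If the heart letter is `S`, then `2` is in the arm, so the leg entry `T(1,0)` lies
strictly between `2` and the heart entry and gives an earlier `N`; symmetrically a `W` is preceded
by the `E` of `T(0,1)`. Hence every prefix has `#S ≤ #N` and `#W ≤ #E`.
-/

/-- The four unit steps of a lattice path. -/
inductive Step : Type
  | N | S | E | W
  deriving DecidableEq

/-- The vector in `ℤ × ℤ` corresponding to a step. -/
def stepVec : Step → ℤ × ℤ
  | Step.N => (0, 1)
  | Step.S => (0, -1)
  | Step.E => (1, 0)
  | Step.W => (-1, 0)

/-- The endpoint of the lattice path described by the word `w`, starting at the origin. -/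
def endpt (w : List Step) : ℤ × ℤ := (w.map stepVec).sum

/-- `w` is a lattice path in `𝒫ₙ`: it has length `2n+2`, stays weakly in the first
quadrant, and ends at `(n, n)`. -/
def IsPath (n : ℕ) (w : List Step) : Prop :=
  w.length = 2 * n + 2 ∧
  (∀ k : ℕ, 0 ≤ (endpt (w.take k)).1 ∧ 0 ≤ (endpt (w.take k)).2) ∧
  endpt w = ((n : ℤ), (n : ℤ))

/-- The cells of the Young diagram of `θ⁽ⁿ⁾ = (n+2, 2, 1ⁿ)`, in (row, column) matrix
coordinates, 0-indexed, English orientation. -/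
def cells (n : ℕ) : Set (ℕ × ℕ) :=
  {c | (c.1 = 0 ∧ c.2 ≤ n + 1) ∨ c = (1, 1) ∨ (c.2 = 0 ∧ 1 ≤ c.1 ∧ c.1 ≤ n + 1)}

/-- `T` is a standard Young tableau of shape `θ⁽ⁿ⁾`: it is a bijective filling of the
cells with `1, …, 2n+4` (and `0` elsewhere), strictly increasing along rows and
down columns. -/
def IsSYT (n : ℕ) (T : ℕ × ℕ → ℕ) : Prop :=
  (∀ c, c ∉ cells n → T c = 0) ∧
  Set.BijOn T (cells n) (Set.Icc 1 (2 * n + 4)) ∧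
  (∀ c ∈ cells n, ∀ d ∈ cells n, c.1 = d.1 → c.2 < d.2 → T c < T d) ∧
  (∀ c ∈ cells n, ∀ d ∈ cells n, c.2 = d.2 → c.1 < d.1 → T c < T d)

/-- The value `m` appears in the arm (first row) of `T`. -/
def InArm (n : ℕ) (T : ℕ × ℕ → ℕ) (m : ℕ) : Prop := ∃ j ≤ n + 1, T (0, j) = m

/-- The value `m` appears in the leg (first column) of `T`. -/
def InLeg (n : ℕ) (T : ℕ × ℕ → ℕ) (m : ℕ) : Prop := ∃ i ≤ n + 1, T (i, 0) = m

/-- The value `m` appears in the heart (the cell `(1,1)`) of `T`. -/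
def InHeart (T : ℕ × ℕ → ℕ) (m : ℕ) : Prop := T (1, 1) = m

open Classical in
/-- The map ψ: the `i`-th letter (1-based, `i = k+1` for `k : Fin (2n+2)`) is determined by
the position of the entry `i+2` of `T`, and, if `i+2` is in the heart, by the position of `2`. -/
noncomputable def psi (n : ℕ) (T : ℕ × ℕ → ℕ) : List Step :=
  List.ofFn (fun k : Fin (2 * n + 2) =>
    if InArm n T (k.val + 3) then Step.E
    else if InLeg n T (k.val + 3) then Step.N
    else if InHeart T (k.val + 3) ∧ InArm n T 2 then Step.S
    else Step.W)

namespace List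

variable {α : Type*} [DecidableEq α]

lemma count_le_one_of_getD_eq {l : List α} {b d : α}
    (h : ∀ i < l.length, ∀ j < l.length, l.getD i d = b → l.getD j d = b → i = j) :
    l.count b ≤ 1 := by
  by_contra! htwo
  obtain ⟨i, j, hij, hi, hj⟩ :=
    duplicate_iff_exists_distinct_get.1 (duplicate_iff_two_le_count.2 htwo)
  refine hij.ne (Fin.ext (h i i.2 j j.2 ?_ ?_))
  · rw [getD_eq_getElem _ _ i.2, hi, get_eq_getElem]
  · rw [getD_eq_getElem _ _ j.2, hj, get_eq_getElem]

lemma count_take_le_count_take {l : List α} {a b d : α} (hb : l.count b ≤ 1)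
    (hab : ∀ i < l.length, l.getD i d = b → ∃ j < i, l.getD j d = a) (k : ℕ) :
    (l.take k).count b ≤ (l.take k).count a := by
  by_cases hmem : b ∈ l.take k
  · obtain ⟨i, hi, hib⟩ := getElem_of_mem hmem
    rw [length_take] at hi
    obtain ⟨j, hji, hja⟩ :=
      hab i (by omega) (by rw [getD_eq_getElem _ _ (by omega)]; simpa using hib)
    rw [getD_eq_getElem _ _ (by omega)] at hja
    have ha : a ∈ l.take k := mem_iff_getElem.2 ⟨j, by simp; omega, by simpa using hja⟩
    calc (l.take k).count b ≤ l.count b := (take_sublist k l).count_le b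
      _ ≤ 1 := hb
      _ ≤ (l.take k).count a := count_pos_iff.2 ha
  · simp [count_eq_zero.2 hmem]

end List

lemma fst_endpt (w : List Step) : (endpt w).1 = (w.count Step.E : ℤ) - w.count Step.W := by
  induction w with
  | nil => rfl
  | cons s w ih => cases s <;> simp [endpt, stepVec] at ih ⊢ <;> omega

lemma snd_endpt (w : List Step) : (endpt w).2 = (w.count Step.N : ℤ) - w.count Step.S := by
  induction w with
  | nil => rfl
  | cons s w ih => cases s <;> simp [endpt, stepVec] at ih ⊢ <;> omega

section Tableau

variable {n : ℕ} {T : ℕ × ℕ → ℕ}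

lemma mem_cells_iff {i j : ℕ} :
    (i, j) ∈ cells n ↔ (i = 0 ∧ j ≤ n + 1) ∨ (i = 1 ∧ j = 1) ∨ (j = 0 ∧ 1 ≤ i ∧ i ≤ n + 1) := by
  simp [cells]

lemma arm_mem_cells {j : ℕ} (hj : j ≤ n + 1) : ((0, j) : ℕ × ℕ) ∈ cells n := Or.inl ⟨rfl, hj⟩

lemma heart_mem_cells : ((1, 1) : ℕ × ℕ) ∈ cells n := Or.inr (Or.inl rfl)

lemma leg_mem_cells {i : ℕ} (hi : i ≤ n + 1) : ((i, 0) : ℕ × ℕ) ∈ cells n := by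
  rcases Nat.eq_zero_or_pos i with rfl | hpos
  · exact arm_mem_cells (Nat.zero_le _)
  · exact Or.inr (Or.inr ⟨rfl, hpos, hi⟩)

open Classical in
/-- In the paper's notation, `p_i = psiLetter n T (i + 2)`. -/
noncomputable def psiLetter (n : ℕ) (T : ℕ × ℕ → ℕ) (m : ℕ) : Step :=
  if InArm n T m then Step.E
  else if InLeg n T m then Step.N
  else if InHeart T m ∧ InArm n T 2 then Step.S
  else Step.W

lemma length_psi : (psi n T).length = 2 * n + 2 := List.length_ofFn

lemma getD_psi {i : ℕ} (hi : i < 2 * n + 2) (d : Step) :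
    (psi n T).getD i d = psiLetter n T (i + 3) := by
  rw [List.getD_eq_getElem _ _ (length_psi.symm ▸ hi)]
  exact List.getElem_ofFn ..

lemma psiLetter_apply_zero_one : psiLetter n T (T (0, 1)) = Step.E :=
  if_pos ⟨1, by omega, rfl⟩

lemma inArm_two_of_psiLetter_eq_S {m : ℕ} (h : psiLetter n T m = Step.S) : InArm n T 2 := by
  unfold psiLetter at h
  split_ifs at h with _ _ hS
  exact hS.2

lemma not_inHeart_and_inArm_two_of_psiLetter_eq_W {m : ℕ} (h : psiLetter n T m = Step.W) :
    ¬ (InHeart T m ∧ InArm n T 2) := by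
  unfold psiLetter at h
  split_ifs at h with _ _ hS
  exact hS

namespace IsSYT

variable (hT : IsSYT n T)
include hT

lemma inArm_or_inHeart_or_inLeg {m : ℕ} (hm : m ∈ Set.Icc 1 (2 * n + 4)) :
    InArm n T m ∨ InHeart T m ∨ InLeg n T m := by
  obtain ⟨⟨i, j⟩, hc, rfl⟩ := hT.2.1.surjOn hm
  rcases mem_cells_iff.1 hc with ⟨rfl, hj⟩ | ⟨rfl, rfl⟩ | ⟨rfl, -, hi⟩
  · exact Or.inl ⟨j, hj, rfl⟩
  · exact Or.inr (Or.inl rfl)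
  · exact Or.inr (Or.inr ⟨i, hi, rfl⟩)

lemma apply_arm_lt_apply_arm {j j' : ℕ} (hj' : j' ≤ n + 1) (h : j < j') :
    T (0, j) < T (0, j') :=
  hT.2.2.1 (0, j) (arm_mem_cells (by omega)) (0, j') (arm_mem_cells hj') rfl h

lemma apply_leg_lt_apply_leg {i i' : ℕ} (hi' : i' ≤ n + 1) (h : i < i') :
    T (i, 0) < T (i', 0) :=
  hT.2.2.2 (i, 0) (leg_mem_cells (by omega)) (i', 0) (leg_mem_cells hi') rfl h

lemma apply_zero_one_lt_apply_one_one : T (0, 1) < T (1, 1) :=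
  hT.2.2.2 (0, 1) (arm_mem_cells (by omega)) (1, 1) heart_mem_cells rfl Nat.zero_lt_one

lemma apply_one_zero_lt_apply_one_one : T (1, 0) < T (1, 1) :=
  hT.2.2.1 (1, 0) (leg_mem_cells (by omega)) (1, 1) heart_mem_cells rfl Nat.zero_lt_one

lemma apply_zero_zero_le {c : ℕ × ℕ} (hc : c ∈ cells n) : T (0, 0) ≤ T c := by
  obtain ⟨i, j⟩ := c
  rcases mem_cells_iff.1 hc with ⟨rfl, hj⟩ | ⟨rfl, rfl⟩ | ⟨rfl, -, hi⟩
  · rcases Nat.eq_zero_or_pos j with rfl | hj0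
    · rfl
    · exact (hT.apply_arm_lt_apply_arm hj hj0).le
  · have := hT.apply_arm_lt_apply_arm (n := n) (by omega) Nat.zero_lt_one
    have := hT.apply_zero_one_lt_apply_one_one
    omega
  · rcases Nat.eq_zero_or_pos i with rfl | hi0
    · rfl
    · exact (hT.apply_leg_lt_apply_leg hi hi0).le

lemma apply_zero_zero : T (0, 0) = 1 := by
  obtain ⟨c, hc, hc1⟩ := hT.2.1.surjOn (show 1 ∈ Set.Icc 1 (2 * n + 4) by simp)
  have hpos := (hT.2.1.mapsTo (arm_mem_cells (n := n) (Nat.zero_le _))).1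
  have := hT.apply_zero_zero_le hc
  omega

lemma apply_zero_one_ne_apply_one_zero : T (0, 1) ≠ T (1, 0) := fun h => by
  simpa using hT.2.1.injOn (arm_mem_cells (by omega)) (leg_mem_cells (by omega)) h

lemma not_inArm_apply_leg {i : ℕ} (hi : 1 ≤ i) (hin : i ≤ n + 1) : ¬ InArm n T (T (i, 0)) :=
  fun ⟨j, hj, h⟩ => by
    have := hT.2.1.injOn (arm_mem_cells hj) (leg_mem_cells hin) h
    simp only [Prod.mk.injEq] at this
    omega

lemma apply_zero_one_eq_two_or_apply_one_zero_eq_two : T (0, 1) = 2 ∨ T (1, 0) = 2 := by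
  obtain ⟨⟨i, j⟩, hc, h2⟩ := hT.2.1.surjOn (show 2 ∈ Set.Icc 1 (2 * n + 4) by simp)
  have h00 := hT.apply_zero_zero
  have h01 := hT.apply_arm_lt_apply_arm (n := n) (by omega) Nat.zero_lt_one
  have h10 := hT.apply_leg_lt_apply_leg (n := n) (by omega) Nat.zero_lt_one
  rcases mem_cells_iff.1 hc with ⟨rfl, hj⟩ | ⟨rfl, rfl⟩ | ⟨rfl, -, hi⟩
  · rcases (by omega : j = 0 ∨ j = 1 ∨ 1 < j) with rfl | rfl | hj1
    · omega
    · exact Or.inl h2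
    · have := hT.apply_arm_lt_apply_arm hj hj1
      omega
  · have := hT.apply_zero_one_lt_apply_one_one
    omega
  · rcases (by omega : i = 0 ∨ i = 1 ∨ 1 < i) with rfl | rfl | hi1
    · omega
    · exact Or.inr h2
    · have := hT.apply_leg_lt_apply_leg hi hi1
      omega

lemma inArm_two_iff : InArm n T 2 ↔ T (0, 1) = 2 := by
  refine ⟨fun h => ?_, fun h => ⟨1, by omega, h⟩⟩
  refine hT.apply_zero_one_eq_two_or_apply_one_zero_eq_two.resolve_right fun h10 => ?_
  exact hT.not_inArm_apply_leg le_rfl (by omega) (h10 ▸ h)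

lemma psiLetter_apply_one_zero : psiLetter n T (T (1, 0)) = Step.N := by
  rw [psiLetter, if_neg (hT.not_inArm_apply_leg le_rfl (by omega)), if_pos ⟨1, by omega, rfl⟩]

lemma apply_one_one_of_psiLetter {m : ℕ} (hm : m ∈ Set.Icc 1 (2 * n + 4))
    (h : psiLetter n T m = Step.S ∨ psiLetter n T m = Step.W) :
    T (1, 1) = m := by
  unfold psiLetter at h
  by_cases harm : InArm n T m
  · simp [harm] at h
  by_cases hleg : InLeg n T m
  · simp [harm, hleg] at h
  exact ((hT.inArm_or_inHeart_or_inLeg hm).resolve_left harm).resolve_right hleg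

lemma apply_one_one_of_getD_psi {i : ℕ} {d : Step} (hi : i < 2 * n + 2)
    (h : (psi n T).getD i d = Step.S ∨ (psi n T).getD i d = Step.W) : T (1, 1) = i + 3 :=
  hT.apply_one_one_of_psiLetter (by simp; omega) (getD_psi hi d ▸ h)

lemma count_psi_le_one {s : Step} (hs : s = Step.S ∨ s = Step.W) : (psi n T).count s ≤ 1 :=
  List.count_le_one_of_getD_eq (d := s) fun i hi j hj hsi hsj => by
    rw [length_psi] at hi hj
    have := hT.apply_one_one_of_getD_psi hi (hsi ▸ hs)
    have := hT.apply_one_one_of_getD_psi hj (hsj ▸ hs)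
    omega

lemma exists_lt_getD_psi_eq_N {i : ℕ} {d : Step} (hi : i < 2 * n + 2)
    (h : (psi n T).getD i d = Step.S) : ∃ j < i, (psi n T).getD j d = Step.N := by
  have h11 := hT.apply_one_one_of_getD_psi hi (.inl h)
  have h01 : T (0, 1) = 2 := hT.inArm_two_iff.1 (inArm_two_of_psiLetter_eq_S (getD_psi hi d ▸ h))
  have := hT.apply_zero_one_ne_apply_one_zero
  have := hT.apply_one_zero_lt_apply_one_one
  have := hT.apply_leg_lt_apply_leg (n := n) (by omega) Nat.zero_lt_one
  have := hT.apply_zero_zero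
  refine ⟨T (1, 0) - 3, by omega, ?_⟩
  rw [getD_psi (by omega), Nat.sub_add_cancel (by omega), hT.psiLetter_apply_one_zero]

lemma exists_lt_getD_psi_eq_E {i : ℕ} {d : Step} (hi : i < 2 * n + 2)
    (h : (psi n T).getD i d = Step.W) : ∃ j < i, (psi n T).getD j d = Step.E := by
  have h11 := hT.apply_one_one_of_getD_psi hi (.inr h)
  have h01 : T (0, 1) ≠ 2 := fun h01 =>
    not_inHeart_and_inArm_two_of_psiLetter_eq_W (getD_psi hi d ▸ h)
      ⟨h11, hT.inArm_two_iff.2 h01⟩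
  have := hT.apply_zero_one_lt_apply_one_one
  have := hT.apply_arm_lt_apply_arm (n := n) (by omega) Nat.zero_lt_one
  have := hT.apply_zero_zero
  refine ⟨T (0, 1) - 3, by omega, ?_⟩
  rw [getD_psi (by omega), Nat.sub_add_cancel (by omega), psiLetter_apply_zero_one]

end IsSYT

end Tableau

/-- Position `i` of the list `psi n T` is the letter `p_{i+1}` of `ψ(T)`. -/
theorem psi_stays_in_quadrant (n : ℕ) (T : ℕ × ℕ → ℕ) (hT : IsSYT n T) :
    (∀ i < 2 * n + 2, (psi n T).getD i Step.E = Step.S →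
      ∃ j < i, (psi n T).getD j Step.E = Step.N) ∧
    (∀ i < 2 * n + 2, (psi n T).getD i Step.N = Step.W →
      ∃ j < i, (psi n T).getD j Step.N = Step.E) ∧
    (∀ k : ℕ, 0 ≤ (endpt ((psi n T).take k)).1 ∧ 0 ≤ (endpt ((psi n T).take k)).2) := by
  refine ⟨fun _ => hT.exists_lt_getD_psi_eq_N, fun _ => hT.exists_lt_getD_psi_eq_E, fun k => ?_⟩
  have hS := List.count_take_le_count_take (d := Step.E) (hT.count_psi_le_one (.inl rfl))
    (fun _ hi => hT.exists_lt_getD_psi_eq_N (length_psi ▸ hi)) k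
  have hW := List.count_take_le_count_take (d := Step.N) (hT.count_psi_le_one (.inr rfl))
    (fun _ hi => hT.exists_lt_getD_psi_eq_E (length_psi ▸ hi)) k
  rw [fst_endpt, snd_endpt]
  constructor <;> omega
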